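/- arXiv:2603.25899 — 16 statements merged into one kernel-verified Lean document; each statement's English description precedes it below -/
import Mathlib

section
/- Let p be a prime, f(x) ∈ ℤ_(p)[x], and a ∈ ℤ_(p). If v_p(f^m(0) - a) > 0 and v_p(f^n(0) - a) > 0 for some 1 ≤ m < n, then there exists ℓ ≥ 1 with v_p(f^ℓ(a) - a) > 0. -/
/-!
Since `x - y ∣ f(x) - f(y)` for every polynomial `f`, congruences modulo an ideal are preserved by
iterating `f`. Hence `a ≡ f^m(0)` gives `f^(n-m)(a) ≡ f^(n-m)(f^m(0)) = f^n(0) ≡ a`. For any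
valuation `v`, apply this in the ring `{v ≤ 1}` (here `ℤ_(p)`) modulo its ideal `{v < 1}`.
-/

open Polynomial

namespace Polynomial

theorem sub_dvd_iterate_eval_sub {R : Type*} [CommRing R] (f : R[X]) (x y : R) (k : ℕ) :
    x - y ∣ f.eval^[k] x - f.eval^[k] y := by
  induction k with
  | zero => simp
  | succ k ih =>
    simp only [Function.iterate_succ_apply']
    exact ih.trans (sub_dvd_eval_sub _ _ f)

theorem iterate_eval_sub_mem_of_iterate_eval_sub_mem {R : Type*} [CommRing R] (J : Ideal R)
    (f : R[X]) {a b : R} {m n : ℕ} (hmn : m ≤ n) (hm : f.eval^[m] b - a ∈ J)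
    (hn : f.eval^[n] b - a ∈ J) : f.eval^[n - m] a - a ∈ J := by
  have hshift : f.eval^[n - m] (f.eval^[m] b) = f.eval^[n] b := by
    rw [← Function.iterate_add_apply, Nat.sub_add_cancel hmn]
  have hdvd : a - f.eval^[m] b ∣ f.eval^[n - m] a - f.eval^[n] b :=
    hshift ▸ sub_dvd_iterate_eval_sub f a _ (n - m)
  have hfar : f.eval^[n - m] a - f.eval^[n] b ∈ J :=
    J.mem_of_dvd hdvd (by simpa only [neg_sub] using J.neg_mem hm)
  simpa only [sub_add_sub_cancel] using J.add_mem hfar hn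

theorem iterate_eval_map {R S : Type*} [CommSemiring R] [CommSemiring S] (φ : R →+* S)
    (f : R[X]) (k : ℕ) (x : R) : (f.map φ).eval^[k] (φ x) = φ (f.eval^[k] x) :=
  (Function.Semiconj.iterate_right (fun y => (eval_map_apply φ y).symm) k x).symm

end Polynomial

theorem Valuation.iterate_eval_sub_lt_one {K Γ₀ : Type*} [CommRing K]
    [LinearOrderedCommGroupWithZero Γ₀] (v : Valuation K Γ₀) {f : K[X]}
    (hf : ∀ i, v (f.coeff i) ≤ 1) {a b : K} (ha : v a ≤ 1) (hb : v b ≤ 1) {m n : ℕ}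
    (hmn : m ≤ n) (hm : v (f.eval^[m] b - a) < 1) (hn : v (f.eval^[n] b - a) < 1) :
    v (f.eval^[n - m] a - a) < 1 := by
  obtain ⟨F, rfl⟩ : ∃ F : v.integer[X], F.map v.integer.subtype = f :=
    ⟨f.toSubring v.integer fun c hc => by
      obtain ⟨i, -, rfl⟩ := mem_coeffs_iff.mp hc
      exact hf i, map_toSubring _ _ _⟩
  have hF k x (hx : v x ≤ 1) :
      (F.map v.integer.subtype).eval^[k] x = (F.eval^[k] ⟨x, hx⟩ : K) :=
    iterate_eval_map v.integer.subtype F k ⟨x, hx⟩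
  have hmem : ∀ x : v.integer, x ∈ v.ltIdeal 1 ↔ v x < 1 := fun x => by
    simp only [mem_ltIdeal_iff, Units.val_one]
  have hperiodic := iterate_eval_sub_mem_of_iterate_eval_sub_mem (v.ltIdeal 1) F (a := ⟨a, ha⟩)
    (b := ⟨b, hb⟩) hmn ((hmem _).mpr (by rwa [hF m b hb] at hm))
    ((hmem _).mpr (by rwa [hF n b hb] at hn))
  rw [hF _ a ha]
  exact (hmem _).mp hperiodic

theorem Rat.padicValuation_le_one_iff_eq_zero_or_padicValRat_nonneg {p : ℕ} [Fact p.Prime]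
    {x : ℚ} : Rat.padicValuation p x ≤ 1 ↔ x = 0 ∨ 0 ≤ padicValRat p x := by
  rcases eq_or_ne x 0 with rfl | hx
  · simp
  · simp [Rat.padicValuation, hx, -WithZero.exp_neg, ← WithZero.exp_zero]

theorem Rat.padicValuation_lt_one_iff_eq_zero_or_padicValRat_pos {p : ℕ} [Fact p.Prime]
    {x : ℚ} : Rat.padicValuation p x < 1 ↔ x = 0 ∨ 0 < padicValRat p x := by
  rcases eq_or_ne x 0 with rfl | hx
  · simp
  · simp [Rat.padicValuation, hx, -WithZero.exp_neg, ← WithZero.exp_zero]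

theorem stmt3_general (p : ℕ) (hp : p.Prime) (f : Polynomial ℚ)
    (hf : ∀ i, f.coeff i = 0 ∨ 0 ≤ padicValRat p (f.coeff i))
    (a : ℚ) (ha : a = 0 ∨ 0 ≤ padicValRat p a)
    (m n : ℕ) (hmn : m < n)
    (hvm : f.eval^[m] 0 - a = 0 ∨ 0 < padicValRat p (f.eval^[m] 0 - a))
    (hvn : f.eval^[n] 0 - a = 0 ∨ 0 < padicValRat p (f.eval^[n] 0 - a)) :
    ∃ l : ℕ, 1 ≤ l ∧ (f.eval^[l] a - a = 0 ∨ 0 < padicValRat p (f.eval^[l] a - a)) := by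
  have : Fact p.Prime := ⟨hp⟩
  simp only [← Rat.padicValuation_le_one_iff_eq_zero_or_padicValRat_nonneg,
    ← Rat.padicValuation_lt_one_iff_eq_zero_or_padicValRat_pos] at hf ha hvm hvn ⊢
  exact ⟨n - m, by omega, (Rat.padicValuation p).iterate_eval_sub_lt_one hf ha (by simp)
    hmn.le hvm hvn⟩

theorem stmt3 (p : ℕ) (hp : p.Prime) (f : Polynomial ℚ)
    (hf : ∀ i, f.coeff i = 0 ∨ 0 ≤ padicValRat p (f.coeff i))
    (a : ℚ) (ha : a = 0 ∨ 0 ≤ padicValRat p a)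
    (m n : ℕ) (hm : 1 ≤ m) (hmn : m < n)
    (hvm : f.eval^[m] 0 - a = 0 ∨ 0 < padicValRat p (f.eval^[m] 0 - a))
    (hvn : f.eval^[n] 0 - a = 0 ∨ 0 < padicValRat p (f.eval^[n] 0 - a)) :
    ∃ l : ℕ, 1 ≤ l ∧ (f.eval^[l] a - a = 0 ∨ 0 < padicValRat p (f.eval^[l] a - a)) :=
  stmt3_general p hp f hf a ha m n hmn hvm hvn
end

section
/- Let a = r/s ∈ ℚ with gcd(r,s) = 1, s > 0, let c = -a - a², and f(x) = x² + c. Then for every n ≥ 0, the denominator of f^n(0) - a in lowest terms is s^(2^n). Equivalently, writing f^n(0) - a = r_n/s_n in lowest terms with s_n > 0, one has s_n = s^(2^n). -/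
/-!
Translating by `a` conjugates `f` to `g x = x ^ 2 + 2 a (x - 1)`, so `f^[n] 0 - a = g^[n] (-a)`.
If `x = p / s ^ m` with `p` coprime to `s` and `m ≥ 2`, then
`g x = (p ^ 2 + s * 2 r (p - s ^ m) s ^ (m - 2)) / s ^ (2 m)`, and the new numerator is again
coprime to `s`. The first step `g (-a) = -r (r + 2 s) / s ^ 2` starts this induction at `m = 2`.
-/

theorem Rat.den_intCast_div_of_isCoprime {p t : ℤ} (ht : 0 < t) (h : IsCoprime p t) :
    (((p : ℚ) / t).den : ℤ) = t := by
  rw [Rat.den_div_eq_of_coprime ht (Int.isCoprime_iff_gcd_eq_one.mp h)]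

section

variable {r s : ℤ}

lemma sq_add_two_mul_sub_one_eq (p : ℤ) (k : ℕ) (hs : (s : ℚ) ≠ 0) :
    ((p : ℚ) / s ^ (k + 2)) ^ 2 + 2 * (r / s) * ((p : ℚ) / s ^ (k + 2) - 1) =
      ((p ^ 2 + s * (2 * r * (p - s ^ (k + 2)) * s ^ k) : ℤ) : ℚ) / s ^ (2 * (k + 2)) := by
  field_simp
  push_cast
  ring

lemma neg_sq_add_two_mul_sub_one_eq (hs : (s : ℚ) ≠ 0) :
    (-(r / s : ℚ)) ^ 2 + 2 * (r / s) * (-(r / s) - 1) =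
      ((-r * (r + s * 2) : ℤ) : ℚ) / s ^ 2 := by
  field_simp
  push_cast
  ring

theorem exists_isCoprime_iterate_eq_div (hrs : IsCoprime r s) (hs : (s : ℚ) ≠ 0) :
    ∀ n, ∃ p : ℤ, IsCoprime p s ∧
      (fun x : ℚ ↦ x ^ 2 + 2 * (r / s) * (x - 1))^[n] (-(r / s)) = p / s ^ 2 ^ n
  | 0 => ⟨-r, hrs.neg_left, by simp [neg_div]⟩
  | 1 => ⟨-r * (r + s * 2), hrs.neg_left.mul_left (hrs.add_mul_left_left 2),
      neg_sq_add_two_mul_sub_one_eq hs⟩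
  | n + 2 => by
    obtain ⟨p, hp, hx⟩ := exists_isCoprime_iterate_eq_div hrs hs (n + 1)
    obtain ⟨k, hk⟩ : ∃ k, 2 ^ (n + 1) = k + 2 :=
      Nat.exists_eq_add_of_le' (Nat.le_self_pow (by omega) 2)
    refine ⟨_, (hp.pow_left (m := 2)).add_mul_left_left (2 * r * (p - s ^ (k + 2)) * s ^ k), ?_⟩
    rw [Function.iterate_succ_apply', hx, pow_succ' 2 (n + 1), hk]
    exact sq_add_two_mul_sub_one_eq p k hs

end

theorem stmt4 (r s : ℤ) (hco : Int.gcd r s = 1) (hs : 0 < s)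
    (a : ℚ) (ha : a = (r : ℚ) / (s : ℚ)) (c : ℚ) (hc : c = -a - a^2)
    (f : ℚ → ℚ) (hf : ∀ x, f x = x^2 + c) :
    ∀ n : ℕ, ((f^[n] 0 - a).den : ℤ) = s ^ (2 ^ n) := by
  have hconj : Function.Semiconj (· - a) f (fun x ↦ x ^ 2 + 2 * a * (x - 1)) := fun y ↦ by
    simp only [hf, hc]
    ring
  intro n
  obtain ⟨p, hp, hx⟩ := exists_isCoprime_iterate_eq_div (Int.isCoprime_iff_gcd_eq_one.mpr hco)
    (by exact_mod_cast hs.ne') n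
  have hiter := hconj.iterate_right n 0
  simp only [zero_sub] at hiter
  rw [hiter, ha, hx]
  exact_mod_cast Rat.den_intCast_div_of_isCoprime (pow_pos hs _) hp.pow_right
end

section
/- Let a = r/s ∈ ℚ with gcd(r,s) = 1, s > 0, c = -a - a², f(x) = x² + c, and write f^n(0) - a = r_n/s^(2^n) in lowest terms. Then the numerators satisfy the recursion r_{n+1} = r_n² + 2 r_n r s^(2^n - 1) - 2 r s^(2^(n+1) - 1) for all n ≥ 0, with r_0 = -r. -/
theorem stmt5 (r s : ℤ) (hco : Int.gcd r s = 1) (hs : 0 < s)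
    (a : ℚ) (ha : a = (r : ℚ) / (s : ℚ)) (c : ℚ) (hc : c = -a - a^2)
    (f : ℚ → ℚ) (hf : ∀ x, f x = x^2 + c) :
    (f^[0] 0 - a).num = -r ∧
    ∀ n : ℕ, (f^[n+1] 0 - a).num =
      (f^[n] 0 - a).num ^ 2 + 2 * (f^[n] 0 - a).num * r * s ^ (2 ^ n - 1)
        - 2 * r * s ^ (2 ^ (n + 1) - 1) := by
  have hsQ : (s : ℚ) ≠ 0 := Int.cast_ne_zero.mpr hs.ne'
  have hcop_rs : IsCoprime s r := (Int.isCoprime_iff_gcd_eq_one.mpr hco).symm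
  have hstep : ∀ n : ℕ, f^[n+1] 0 - a = (f^[n] 0 - a)^2 + 2*a*(f^[n] 0 - a) - 2*a := by
    intro n
    rw [Function.iterate_succ_apply', hf, hc]
    ring
  have key : ∀ n : ℕ,
      (f^[n] 0 - a) = ((f^[n] 0 - a).num : ℚ) / (s : ℚ) ^ (2^n) ∧
      Int.gcd (f^[n] 0 - a).num s = 1 ∧
      (n = 0 → (f^[n] 0 - a).num = -r) ∧
      (∀ m : ℕ, n = m + 1 → (f^[n] 0 - a).num =
        (f^[m] 0 - a).num ^ 2 + 2 * (f^[m] 0 - a).num * r * s ^ (2 ^ m - 1)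
          - 2 * r * s ^ (2 ^ (m + 1) - 1)) := by
    intro n
    induction n with
    | zero =>
      have h0 : f^[0] 0 - a = ((-r : ℤ) : ℚ) / (s : ℚ) := by
        simp [ha]; ring
      have hcop : Nat.Coprime (-r : ℤ).natAbs s.natAbs := by
        simpa [Int.gcd] using hco
      have hnum : (f^[0] 0 - a).num = -r := by
        rw [h0]; exact Rat.num_div_eq_of_coprime hs hcop
      refine ⟨?_, ?_, fun _ => hnum, fun m hm => by omega⟩
      · rw [hnum, h0]; norm_num
      · rw [hnum]; simpa [Int.gcd] using hco
    | succ n ih =>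
      obtain ⟨heq, hgcd, hzero, -⟩ := ih
      set R := (f^[n] 0 - a).num with hR
      set E := R ^ 2 + 2 * R * r * s ^ (2 ^ n - 1) - 2 * r * s ^ (2 ^ (n + 1) - 1) with hE
      have hcopRs : IsCoprime s R := (Int.isCoprime_iff_gcd_eq_one.mpr hgcd).symm
      have h1n : (1:ℕ) ≤ 2^n := Nat.one_le_two_pow
      have h1n1 : (2:ℕ) ≤ 2^(n+1) := by
        have : (2:ℕ)^1 ≤ 2^(n+1) := Nat.pow_le_pow_right (by norm_num) (by omega)
        simpa using this
      have hpow1 : (s : ℚ) ^ (2^n - 1) * (s:ℚ) = (s:ℚ) ^ (2^n) := by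
        rw [← pow_succ]; congr 1; omega
      have hpow2 : (s : ℚ) ^ (2^(n+1) - 1) * (s:ℚ) = (s:ℚ) ^ (2^(n+1)) := by
        rw [← pow_succ]; congr 1; omega
      have hpow3 : (s:ℚ) ^ (2^(n+1)) = (s : ℚ) ^ (2^n) * (s:ℚ) ^ (2^n) := by
        rw [← pow_add]; congr 1; omega
      have e1 : (s : ℚ) ^ (2^n - 1) = (s:ℚ)^(2^n) / s := (eq_div_iff hsQ).mpr hpow1
      have e2 : (s : ℚ) ^ (2^(n+1) - 1) = (s:ℚ)^(2^n) * (s:ℚ)^(2^n) / s := by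
        rw [(eq_div_iff hsQ).mpr hpow2, hpow3]
      have hEQ : ((E : ℤ) : ℚ)
          = (R:ℚ)^2 + 2*(R:ℚ)*(r:ℚ)*(s:ℚ)^(2^n-1) - 2*(r:ℚ)*(s:ℚ)^(2^(n+1)-1) := by
        push_cast [hE]; ring
      have hrep : f^[n+1] 0 - a = ((E : ℤ) : ℚ) / (s : ℚ) ^ (2^(n+1)) := by
        rw [hstep n, heq, ha, hEQ, e1, e2, hpow3]
        field_simp
      -- coprimality of E with s
      have hcopEs : IsCoprime s E := by
        have h1 : IsCoprime s (R ^ 2 + 2 * R * r * s ^ (2 ^ n - 1)) := by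
          rcases Nat.eq_zero_or_pos n with hn | hn
          · subst hn
            have hR0 : R = -r := hzero rfl
            have : R ^ 2 + 2 * R * r * s ^ (2 ^ 0 - 1) = -(r^2) := by
              rw [hR0]; ring
            rw [this]
            exact (hcop_rs.pow_right).neg_right
          · have h2 : 2 ≤ 2^n := by
              have : (2:ℕ)^1 ≤ 2^n := Nat.pow_le_pow_right (by norm_num) hn
              simpa using this
            have : R ^ 2 + 2 * R * r * s ^ (2 ^ n - 1)
                = R ^ 2 + s * (2 * R * r * s ^ (2 ^ n - 2)) := by
              rw [show (2:ℕ)^n - 1 = (2^n - 2) + 1 by omega, pow_succ]; ring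
            rw [this]
            exact (hcopRs.pow_right).add_mul_left_right _
        have : E = (R ^ 2 + 2 * R * r * s ^ (2 ^ n - 1))
            + s * (-(2 * r * s ^ (2 ^ (n+1) - 2))) := by
          rw [hE, show (2:ℕ)^(n+1) - 1 = (2^(n+1) - 2) + 1 by omega, pow_succ]; ring
        rw [this]
        exact h1.add_mul_left_right _
      have hgcdE : Int.gcd E s = 1 :=
        Int.isCoprime_iff_gcd_eq_one.mp hcopEs.symm
      have hspow : (0:ℤ) < s ^ (2^(n+1)) := pow_pos hs _
      have hcopN : Nat.Coprime E.natAbs (s ^ (2^(n+1))).natAbs := by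
        rw [Int.natAbs_pow]
        exact Nat.Coprime.pow_right _ hgcdE
      have hnum : (f^[n+1] 0 - a).num = E := by
        rw [hrep]
        have := Rat.num_div_eq_of_coprime hspow hcopN
        rwa [Int.cast_pow] at this
      refine ⟨?_, ?_, fun h => by omega, fun m hm => ?_⟩
      · rw [hnum, ← hrep]
      · rw [hnum]; exact hgcdE
      · have hmn : m = n := by omega
        subst hmn
        exact hnum
  exact ⟨(key 0).2.2.1 rfl, fun n => (key (n+1)).2.2.2 n rfl⟩
end

section
/- Let a ∈ ℚ, c = -a - a², f(x) = x² + c, and p a prime. Then v_p(a) < 0 if and only if v_p(f^n(0) - a) < 0 for some n ≥ 1, and in that case v_p(f^n(0) - a) < 0 for all n ≥ 1. -/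
/-! When `v_p(a) ≥ 0`, the constant `c` is `p`-integral, and the `p`-integral rationals form a ring,
so every `f^n(0) - a` is `p`-integral. When `v = v_p(a) < 0`, the term `-a²` dominates in
`c = -a - a²`, so `v_p(c) = 2v`; the square then dominates in `x² + c` as soon as `v_p(x) < v`,
so `v_p(f^n(0)) < v` for all `n ≥ 1`, and finally `f^n(0)` dominates in `f^n(0) - a`. -/

namespace padicValRat

lemma ne_zero_of_neg {p : ℕ} {q : ℚ} (h : padicValRat p q < 0) : q ≠ 0 := by
  rintro rfl
  simp at h

variable {p : ℕ} [Fact p.Prime]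

lemma add_eq_left_of_lt {q r : ℚ} (hq : q ≠ 0) (h : padicValRat p q < padicValRat p r) :
    padicValRat p (q + r) = padicValRat p q := by
  rcases eq_or_ne r 0 with rfl | hr
  · rw [add_zero]
  refine add_eq_of_lt (fun hqr => ?_) hq hr h
  rw [eq_neg_of_add_eq_zero_right hqr, padicValRat.neg] at h
  exact h.false

variable (p) in
noncomputable def integralSubring : Subring ℚ :=
  (PadicInt.subring p).comap (Rat.castHom ℚ_[p])

lemma mem_integralSubring_iff {q : ℚ} : q ∈ integralSubring p ↔ 0 ≤ padicValRat p q := by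
  rw [integralSubring, Subring.mem_comap, Rat.coe_castHom, PadicInt.mem_subring_iff,
    Padic.norm_le_one_iff_val_nonneg, Padic.valuation_ratCast]

end padicValRat

open padicValRat

variable {p : ℕ} [Fact p.Prime]

lemma padicValRat_iterate_sq_add_sub_nonneg {a c : ℚ} (ha : 0 ≤ padicValRat p a)
    (hc : 0 ≤ padicValRat p c) (n : ℕ) :
    0 ≤ padicValRat p ((fun x => x ^ 2 + c)^[n] 0 - a) := by
  rw [← mem_integralSubring_iff] at ha hc ⊢
  refine Subring.sub_mem _ ?_ ha
  induction n with
  | zero => exact Subring.zero_mem _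
  | succ n ih =>
    rw [Function.iterate_succ_apply']
    exact Subring.add_mem _ (Subring.pow_mem _ ih 2) hc

lemma padicValRat_neg_sub_sq {a : ℚ} (ha : padicValRat p a < 0) :
    padicValRat p (-a - a ^ 2) = 2 * padicValRat p a := by
  have hsq : padicValRat p (-a ^ 2) = 2 * padicValRat p a := by
    rw [padicValRat.neg, padicValRat.pow]
    norm_num
  rw [show -a - a ^ 2 = -a ^ 2 + -a by ring, add_eq_left_of_lt, hsq]
  · exact neg_ne_zero.2 (pow_ne_zero 2 (ne_zero_of_neg ha))
  · rw [hsq, padicValRat.neg]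
    linarith

lemma padicValRat_sq_add_lt {c x : ℚ} {w : ℤ} (hw : w ≤ 0) (hc : 2 * w ≤ padicValRat p c)
    (hx : padicValRat p x < w) : padicValRat p (x ^ 2 + c) < w := by
  have hx0 : x ≠ 0 := ne_zero_of_neg (hx.trans_le hw)
  have hsq : padicValRat p (x ^ 2) = 2 * padicValRat p x := by
    rw [padicValRat.pow]
    norm_num
  rw [add_eq_left_of_lt (pow_ne_zero 2 hx0) (by omega), hsq]
  omega

lemma padicValRat_iterate_sq_add_lt {c : ℚ} {w : ℤ} (hw : w ≤ 0)
    (hc₁ : 2 * w ≤ padicValRat p c) (hc₂ : padicValRat p c < w) {n : ℕ} (hn : 1 ≤ n) :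
    padicValRat p ((fun x => x ^ 2 + c)^[n] 0) < w := by
  induction n, hn using Nat.le_induction with
  | base => simpa using hc₂
  | succ n _ ih =>
    rw [Function.iterate_succ_apply']
    exact padicValRat_sq_add_lt hw hc₁ ih

lemma padicValRat_iterate_sq_add_sub_neg {a : ℚ} (ha : padicValRat p a < 0) {n : ℕ}
    (hn : 1 ≤ n) : padicValRat p ((fun x => x ^ 2 + (-a - a ^ 2))^[n] 0 - a) < 0 := by
  have hc := padicValRat_neg_sub_sq ha
  have hx := padicValRat_iterate_sq_add_lt ha.le hc.ge (by omega) hn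
  rw [sub_eq_add_neg, add_eq_left_of_lt (ne_zero_of_neg (hx.trans ha))
    (by rwa [padicValRat.neg])]
  exact hx.trans ha

theorem stmt6 (p : ℕ) (hp : p.Prime) (a : ℚ) (c : ℚ) (hc : c = -a - a^2)
    (f : ℚ → ℚ) (hf : ∀ x, f x = x^2 + c) :
    (padicValRat p a < 0 ↔ ∃ n : ℕ, 1 ≤ n ∧ padicValRat p (f^[n] 0 - a) < 0) ∧
    (padicValRat p a < 0 → ∀ n : ℕ, 1 ≤ n → padicValRat p (f^[n] 0 - a) < 0) := by
  have : Fact p.Prime := ⟨hp⟩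
  obtain rfl : f = fun x => x ^ 2 + c := funext hf
  subst hc
  have escapes : padicValRat p a < 0 → ∀ n : ℕ, 1 ≤ n →
      padicValRat p ((fun x => x ^ 2 + (-a - a ^ 2))^[n] 0 - a) < 0 :=
    fun ha _ hn => padicValRat_iterate_sq_add_sub_neg ha hn
  refine ⟨⟨fun ha => ⟨1, le_rfl, escapes ha 1 le_rfl⟩, fun ⟨n, _, hn⟩ => ?_⟩, escapes⟩
  by_contra! ha
  have hc : 0 ≤ padicValRat p (-a - a ^ 2) := by
    rw [← mem_integralSubring_iff] at ha ⊢
    exact Subring.sub_mem _ (Subring.neg_mem _ ha) (Subring.pow_mem _ ha 2)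
  exact (padicValRat_iterate_sq_add_sub_nonneg ha hc n).not_gt hn
end

section
/- Let a ∈ ℚ with v_2(a) = 0, c = -a - a², and f(x) = x² + c. Then v_2(f^n(0) - a) = 0 for all n ≥ 0. -/
theorem stmt7 (a : ℚ) (ha : a ≠ 0) (hv : padicValRat 2 a = 0)
    (c : ℚ) (hc : c = -a - a^2) (f : ℚ → ℚ) (hf : ∀ x, f x = x^2 + c) :
    ∀ n : ℕ, f^[n] 0 - a ≠ 0 ∧ padicValRat 2 (f^[n] 0 - a) = 0 := by
  have key : ∀ n : ℕ, (f^[n] 0 - a ≠ 0 ∧ padicValRat 2 (f^[n] 0 - a) = 0) ∧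
      (f^[n] 0 + a ≠ 0 ∧ padicValRat 2 (f^[n] 0 + a) = 0) := by
    intro n
    induction n with
    | zero =>
      simp only [Function.iterate_zero, id, zero_sub, zero_add]
      exact ⟨⟨neg_ne_zero.mpr ha, by rw [padicValRat.neg]; exact hv⟩, ⟨ha, hv⟩⟩
    | succ n ih =>
      obtain ⟨⟨hm, hvm⟩, ⟨hp, hvp⟩⟩ := ih
      set x := f^[n] 0 with hx
      have hstep : f^[n+1] 0 = x^2 + c := by
        rw [Function.iterate_succ_apply', hf]
      have hplus : f^[n+1] 0 + a = (x - a) * (x + a) := by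
        rw [hstep, hc]; ring
      have hpne : f^[n+1] 0 + a ≠ 0 := hplus ▸ mul_ne_zero hm hp
      have hpval : padicValRat 2 (f^[n+1] 0 + a) = 0 := by
        rw [hplus, padicValRat.mul hm hp, hvm, hvp]; norm_num
      have h2 : padicValRat 2 (2:ℚ) = 1 := by
        simpa using padicValRat.self (p := 2) (by norm_num)
      have h2a : padicValRat 2 (-(2*a)) = 1 := by
        rw [padicValRat.neg, padicValRat.mul (by norm_num) ha, hv, h2]; norm_num
      have hminus : f^[n+1] 0 - a = (f^[n+1] 0 + a) + (-(2*a)) := by ring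
      have h2ane : -(2*a) ≠ 0 := by simpa using ha
      have hmne : f^[n+1] 0 - a ≠ 0 := by
        rw [hminus]
        intro h
        have := padicValRat.neg (p := 2) (2*a)
        have heq : f^[n+1] 0 + a = -(-(2*a)) := by linear_combination h
        rw [heq, padicValRat.neg, padicValRat.neg] at hpval
        rw [padicValRat.mul (by norm_num) ha, hv, h2] at hpval
        norm_num at hpval
      refine ⟨⟨hmne, ?_⟩, ⟨hpne, hpval⟩⟩
      rw [hminus, padicValRat.add_eq_of_lt (hminus ▸ hmne) hpne h2ane
        (by rw [hpval, h2a]; norm_num), hpval]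
  exact fun n => (key n).1
end

section
/- Let a ∈ ℚ with v_2(a) ≥ 1, c = -a - a², and f(x) = x² + c. Then v_2(f^n(0) - a) = v_2(a) + 1 for all n ≥ 2. -/
/-!
Write `u = x - a`. Then `f x - a = u (u + 2a) - 2a`, so as soon as `|u|₂ ≤ |2a|₂ < 1` the
product `u (u + 2a)` has norm at most `|2a|₂² < |2a|₂`, and the ultrametric inequality gives
`|f x - a|₂ = |2a|₂`. The hypothesis `v₂(a) ≥ 1` means `|a|₂ ≤ |2|₂`, which yields both
`|2a|₂ < 1` and `|f 0 - a|₂ = |2a + a²|₂ ≤ |2a|₂`; from then on the orbit stays on the sphere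
of radius `|2a|₂` around `a`.
-/

namespace padicNorm

variable {p : ℕ} [Fact p.Prime]

theorem sub_eq_of_lt {x y : ℚ} (h : padicNorm p y < padicNorm p x) :
    padicNorm p (y - x) = padicNorm p x := by
  rw [sub_eq_add_neg, add_eq_max_of_ne (by rw [padicNorm.neg]; exact h.ne), padicNorm.neg,
    max_eq_right h.le]

theorem le_self_of_one_le_padicValRat {q : ℚ} (hq : q ≠ 0) (h : 1 ≤ padicValRat p q) :
    padicNorm p q ≤ padicNorm p p := by
  rw [padicNorm.eq_zpow_of_nonzero hq, padicNorm_p_of_prime, ← zpow_neg_one]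
  exact zpow_le_zpow_right₀ (by exact_mod_cast (Fact.out : p.Prime).one_le) (by omega)

theorem padicValRat_eq_of_eq {x y : ℚ} (hy : y ≠ 0) (h : padicNorm p x = padicNorm p y) :
    x ≠ 0 ∧ padicValRat p x = padicValRat p y := by
  have hx : x ≠ 0 := fun hx => padicNorm.nonzero (p := p) hy (by rw [← h, hx, padicNorm.zero])
  refine ⟨hx, ?_⟩
  rw [padicNorm.eq_zpow_of_nonzero hx, padicNorm.eq_zpow_of_nonzero hy] at h
  have hp : (1 : ℚ) < p := by exact_mod_cast (Fact.out : p.Prime).one_lt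
  exact neg_inj.mp (zpow_right_injective₀ (by positivity) hp.ne' h)

theorem mul_add_sub_eq {u b : ℚ} (hb : padicNorm p b < 1) (hu : padicNorm p u ≤ padicNorm p b) :
    padicNorm p (u * (u + b) - b) = padicNorm p b := by
  rcases eq_or_ne b 0 with rfl | hb0
  · obtain rfl : u = 0 :=
      zero_of_padicNorm_eq_zero (le_antisymm (by simpa using hu) (padicNorm.nonneg u))
    simp
  have hpos : 0 < padicNorm p b := lt_of_le_of_ne (padicNorm.nonneg b) (padicNorm.nonzero hb0).symm
  apply sub_eq_of_lt
  calc padicNorm p (u * (u + b)) = padicNorm p u * padicNorm p (u + b) := padicNorm.mul u (u + b)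
    _ ≤ padicNorm p b * padicNorm p b := by
        gcongr
        · exact padicNorm.nonneg _
        · exact padicNorm.nonarchimedean.trans (max_le hu le_rfl)
    _ < padicNorm p b := mul_lt_of_lt_one_right hpos hb

end padicNorm

theorem padicNorm_iterate_sub_eq {p : ℕ} [Fact p.Prime] {g : ℚ → ℚ} {a b x : ℚ}
    (hg : ∀ y, g y - a = (y - a) * (y - a + b) - b) (hb : padicNorm p b < 1)
    (hx : padicNorm p (x - a) ≤ padicNorm p b) :
    ∀ n : ℕ, padicNorm p (g^[n + 1] x - a) = padicNorm p b
  | 0 => by rw [Function.iterate_one, hg]; exact padicNorm.mul_add_sub_eq hb hx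
  | n + 1 => by
    rw [Function.iterate_succ_apply', hg]
    exact padicNorm.mul_add_sub_eq hb (padicNorm_iterate_sub_eq hg hb hx n).le

theorem stmt8 (a : ℚ) (ha : a ≠ 0) (hv : 1 ≤ padicValRat 2 a)
    (c : ℚ) (hc : c = -a - a^2) (f : ℚ → ℚ) (hf : ∀ x, f x = x^2 + c) :
    ∀ n : ℕ, 2 ≤ n → f^[n] 0 - a ≠ 0 ∧
      padicValRat 2 (f^[n] 0 - a) = padicValRat 2 a + 1 := by
  have hf_sub : ∀ x, f x - a = (x - a) * (x - a + 2 * a) - 2 * a := fun x => by rw [hf, hc]; ring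
  have ha_le : padicNorm 2 a ≤ padicNorm 2 2 := by
    exact_mod_cast padicNorm.le_self_of_one_le_padicValRat ha hv
  have h2a_lt : padicNorm 2 (2 * a) < 1 := by
    rw [padicNorm.mul]
    calc padicNorm 2 2 * padicNorm 2 a ≤ padicNorm 2 2 * padicNorm 2 2 := by
          gcongr; exact padicNorm.nonneg _
      _ < 1 := by
          rw [show (2 : ℚ) = (2 : ℕ) by norm_num, padicNorm.padicNorm_p_of_prime]
          norm_num
  have hstart : padicNorm 2 (f 0 - a) ≤ padicNorm 2 (2 * a) := by
    rw [hf, hc, show (0 : ℚ) ^ 2 + (-a - a ^ 2) - a = -(2 * a + a * a) by ring, padicNorm.neg]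
    refine padicNorm.nonarchimedean.trans (max_le le_rfl ?_)
    rw [padicNorm.mul, padicNorm.mul]
    gcongr; exact padicNorm.nonneg _
  intro n hn
  obtain ⟨m, rfl⟩ := Nat.exists_eq_add_of_le' hn
  have hnorm := padicNorm_iterate_sub_eq hf_sub h2a_lt hstart m
  rw [← Function.iterate_succ_apply] at hnorm
  obtain ⟨hne, hval⟩ := padicNorm.padicValRat_eq_of_eq (mul_ne_zero two_ne_zero ha) hnorm
  refine ⟨hne, ?_⟩
  rw [hval, padicValRat.mul two_ne_zero ha, add_comm]
  simpa using padicValRat.self (p := 2) one_lt_two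
end

section
/- Let a ∈ ℚ, c = -a - a², f(x) = x² + c, and let p be an odd prime with v_p(a) > 0. Then v_p(f^n(0) - a) = v_p(a) for all n ≥ 1. -/
private lemma val_two_zero (p : ℕ) (hp : p.Prime) (hodd : p ≠ 2) :
    padicValRat p 2 = 0 := by
  have : padicValRat p ((2 : ℕ) : ℚ) = padicValNat p 2 := padicValRat.of_nat
  rw [show (2:ℚ) = ((2:ℕ):ℚ) by norm_num, this,
    padicValNat.eq_zero_of_not_dvd (by
      intro h
      exact hodd ((Nat.prime_dvd_prime_iff_eq hp Nat.prime_two).mp h))]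
  simp

private lemma step (p : ℕ) (hp : p.Prime) (hodd : p ≠ 2)
    (a : ℚ) (ha : a ≠ 0) (hv : 0 < padicValRat p a)
    (u : ℚ) (hu : u ≠ 0) (huv : padicValRat p u = padicValRat p a) :
    u * (u + 2*a) - 2*a ≠ 0 ∧
      padicValRat p (u * (u + 2*a) - 2*a) = padicValRat p a := by
  haveI : Fact p.Prime := ⟨hp⟩
  have h2 : padicValRat p 2 = 0 := val_two_zero p hp hodd
  have h2a : padicValRat p (2*a) = padicValRat p a := by
    rw [padicValRat.mul (by norm_num) ha, h2, zero_add]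
  have h2a' : padicValRat p (-(2*a)) = padicValRat p a := by
    rw [padicValRat.neg, h2a]
  by_cases hzero : u + 2*a = 0
  · rw [hzero, mul_zero, zero_sub]
    refine ⟨by simpa using ha, h2a'⟩
  · have hsum : padicValRat p a ≤ padicValRat p (u + 2*a) := by
      have := padicValRat.min_le_padicValRat_add (p := p) hzero
      rwa [huv, h2a, min_self] at this
    have hprod : padicValRat p a < padicValRat p (u * (u + 2*a)) := by
      rw [padicValRat.mul hu hzero, huv]
      linarith
    have hne : -(2*a) + u * (u + 2*a) ≠ 0 := by
      intro h
      have : u * (u + 2*a) = 2*a := by linarith [h]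
      rw [this, h2a] at hprod
      exact lt_irrefl _ hprod
    have key : padicValRat p (-(2*a) + u * (u + 2*a)) = padicValRat p a := by
      rw [padicValRat.add_eq_of_lt hne (by simpa using mul_ne_zero (by norm_num : (2:ℚ) ≠ 0) ha)
        (mul_ne_zero hu hzero) (by rw [h2a']; exact hprod), h2a']
    constructor
    · intro h
      apply hne
      rw [add_comm]
      linarith [h]
    · rw [show u * (u + 2*a) - 2*a = -(2*a) + u * (u + 2*a) by ring]
      exact key

theorem stmt9 (p : ℕ) (hp : p.Prime) (hodd : p ≠ 2)
    (a : ℚ) (ha : a ≠ 0) (hv : 0 < padicValRat p a)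
    (c : ℚ) (hc : c = -a - a^2) (f : ℚ → ℚ) (hf : ∀ x, f x = x^2 + c) :
    ∀ n : ℕ, 1 ≤ n → f^[n] 0 - a ≠ 0 ∧
      padicValRat p (f^[n] 0 - a) = padicValRat p a := by
  haveI : Fact p.Prime := ⟨hp⟩
  have key : ∀ x : ℚ, f x - a = (x - a) * ((x - a) + 2*a) - 2*a := by
    intro x; rw [hf, hc]; ring
  intro n hn
  induction n with
  | zero => omega
  | succ m ih =>
    rcases Nat.eq_zero_or_pos m with hm | hm
    · subst hm
      rw [Function.iterate_one, key 0]
      have hua : (0:ℚ) - a ≠ 0 := by simpa using ha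
      have huv : padicValRat p ((0:ℚ) - a) = padicValRat p a := by
        rw [zero_sub, padicValRat.neg]
      exact step p hp hodd a ha hv _ hua huv
    · obtain ⟨hne, hval⟩ := ih hm
      rw [Function.iterate_succ_apply', key]
      exact step p hp hodd a ha hv _ hne hval
end

section
/- Let a ∈ ℚ with -2 < a < 0, c = -a - a², f(x) = x² + c. Then f^n(0) - a > 0 for all n ≥ 1. -/
theorem stmt11 (a : ℚ) (ha1 : -2 < a) (ha2 : a < 0)
    (c : ℚ) (hc : c = -a - a^2) (f : ℚ → ℚ) (hf : ∀ x, f x = x^2 + c) :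
    ∀ n : ℕ, 1 ≤ n → 0 < f^[n] 0 - a := by
  intro n hn
  obtain ⟨m, rfl⟩ := Nat.exists_eq_add_of_le hn
  rw [add_comm, Function.iterate_succ_apply', hf, hc]
  nlinarith [sq_nonneg (f^[m] 0)]
end

section
/- Let a be a real number with a ≤ -2 or a ≥ 1, c = -a - a², f(x) = x² + c. Then f^n(0) - a > 0 for all n ≥ 2. -/
theorem stmt12 (a : ℝ) (ha : a ≤ -2 ∨ 1 ≤ a)
    (c : ℝ) (hc : c = -a - a^2) (f : ℝ → ℝ) (hf : ∀ x, f x = x^2 + c) :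
    ∀ n : ℕ, 2 ≤ n → 0 < f^[n] 0 - a := by
  have key : ∀ m : ℕ, 2 ≤ m →
      (a ≤ -2 → -a ≤ f^[m] 0) ∧ (1 ≤ a → a + 1 ≤ f^[m] 0) := by
    intro m hm
    induction m with
    | zero => omega
    | succ k ih =>
      rcases Nat.lt_or_ge k 2 with hk | hk
      · have hk1 : k = 1 := by omega
        subst hk1
        have h2 : f^[2] 0 = (0 ^ 2 + c) ^ 2 + c := by
          rw [Function.iterate_succ_apply', Function.iterate_one, hf, hf]
        rw [h2]
        constructor <;> intro h
        · nlinarith [sq_nonneg a, sq_nonneg (a + 2), sq_nonneg (a * (a + 2))]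
        · nlinarith [sq_nonneg (a + 1), sq_nonneg (a - 1), sq_nonneg a]
      · have ih := ih hk
        rw [Function.iterate_succ_apply', hf]
        set x := f^[k] 0 with hx
        constructor <;> intro h
        · have h1 := ih.1 h
          nlinarith [mul_nonneg (by linarith : (0:ℝ) ≤ x + a) (by linarith : (0:ℝ) ≤ x - a)]
        · have h1 := ih.2 h
          nlinarith [mul_nonneg (by linarith : (0:ℝ) ≤ x - a - 1) (by linarith : (0:ℝ) ≤ x + a + 1)]
  intro n hn
  rcases ha with h | h
  · have := (key n hn).1 h
    linarith
  · have := (key n hn).2 h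
    linarith
end

section
/- Let β be the unique real number in (0,1) satisfying β⁴ + 2β³ - 2β = 0 and β ≠ 0 (approximately 0.839). Let a be a real number with 0 < a < β, c = -a - a², f(x) = x² + c. Then f^n(0) - a < 0 for all n ≥ 1. -/
theorem stmt13 (β : ℝ) (hβ1 : 0 < β) (hβ2 : β < 1) (hβ : β^4 + 2*β^3 - 2*β = 0)
    (a : ℝ) (ha1 : 0 < a) (ha2 : a < β)
    (c : ℝ) (hc : c = -a - a^2) (f : ℝ → ℝ) (hf : ∀ x, f x = x^2 + c) :
    ∀ n : ℕ, 1 ≤ n → f^[n] 0 - a < 0 := by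
  have h0 : β * (β^3 + 2*β^2 - 2) = 0 := by linear_combination hβ
  have hβ3 : β^3 + 2*β^2 - 2 = 0 := by
    rcases mul_eq_zero.mp h0 with h | h
    · linarith
    · exact h
  have hkey : a^3 + 2*a^2 < 2 := by nlinarith [mul_pos (sub_pos.2 ha2) (add_pos hβ1 ha1), mul_pos (mul_pos (sub_pos.2 ha2) hβ1) ha1, sq_nonneg (β - a)]
  have hstep : ∀ x : ℝ, c ≤ x → x < a → c ≤ f x ∧ f x < a := by
    intro x h1 h2
    rw [hf]
    constructor
    · nlinarith [sq_nonneg x]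
    · have hx2 : x^2 ≤ c^2 := by nlinarith [mul_nonneg (sub_nonneg.2 h1) (by nlinarith : 0 ≤ -c - x)]
      nlinarith [sq_nonneg a]
  have main : ∀ n : ℕ, 1 ≤ n → c ≤ f^[n] 0 ∧ f^[n] 0 < a := by
    intro n hn
    induction n, hn using Nat.le_induction with
    | base =>
      simp only [Function.iterate_one, hf]
      constructor <;> nlinarith
    | succ n hn ih =>
      rw [Function.iterate_succ_apply']
      exact hstep _ ih.1 ih.2
  intro n hn
  linarith [(main n hn).2]
end

section
/- Let a be a real number with 0 < a < β where β is as in the previous setup, c = -a - a², f(x) = x² + c. Then c ≤ f^n(0) ≤ f²(0) for all n ≥ 1. -/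
theorem stmt14 (β : ℝ) (hβ1 : 0 < β) (hβ2 : β < 1) (hβ : β^4 + 2*β^3 - 2*β = 0)
    (a : ℝ) (ha1 : 0 < a) (ha2 : a < β)
    (c : ℝ) (hc : c = -a - a^2) (f : ℝ → ℝ) (hf : ∀ x, f x = x^2 + c) :
    ∀ n : ℕ, 1 ≤ n → c ≤ f^[n] 0 ∧ f^[n] 0 ≤ f^[2] 0 := by
  have ha3 : a < 1 := lt_trans ha2 hβ2
  have hc0 : c < 0 := by nlinarith
  have hc2 : -2 < c := by nlinarith
  have hM : f^[2] 0 = c^2 + c := by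
    simp [Function.iterate_succ_apply', hf]
  intro n hn
  rw [hM]
  induction n with
  | zero => omega
  | succ k ih =>
    rcases Nat.eq_zero_or_pos k with hk | hk
    · subst hk
      simp [hf]
      positivity
    · obtain ⟨h1, h2⟩ := ih hk
      rw [Function.iterate_succ_apply', hf]
      set x := f^[k] 0
      have hx : x ≤ -c := by nlinarith
      constructor
      · nlinarith [sq_nonneg x]
      · nlinarith
end

section
/- Let a = r/s with gcd(r,s) = 1, s > 0, r not divisible by 3, c = -a - a², f(x) = x² + c, and let r_n be the numerator of f^n(0) - a in lowest terms (with denominator s^(2^n)). Then r_n ≡ 1 (mod 3) for all n ≥ 2. -/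
lemma oddpow3 (x : ZMod 3) (m : ℕ) : x ^ (2 * m + 1) = x := by
  induction m with
  | zero => simp
  | succ k ih =>
    have h3 : ∀ y : ZMod 3, y ^ 3 = y := by decide
    calc x ^ (2 * (k + 1) + 1) = x ^ (2 * k + 1) * x ^ 2 := by ring
    _ = x * x ^ 2 := by rw [ih]
    _ = x ^ 3 := by ring
    _ = x := h3 x

lemma spow3 (s : ℤ) (n : ℕ) (hn : 1 ≤ n) : ((s : ZMod 3)) ^ (2 ^ n - 1) = (s : ZMod 3) := by
  have h : 2 ^ n - 1 = 2 * (2 ^ (n - 1) - 1) + 1 := by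
    have h1 : 2 ^ n = 2 * 2 ^ (n - 1) := by
      rw [← pow_succ']
      congr 1
      omega
    have h2 : 1 ≤ 2 ^ (n - 1) := Nat.one_le_two_pow
    omega
  rw [h, oddpow3]

theorem stmt15 (r s : ℤ) (hco : Int.gcd r s = 1) (hs : 0 < s) (hr : ¬ (3 ∣ r))
    (R : ℕ → ℤ) (hR0 : R 0 = -r)
    (hRrec : ∀ n : ℕ, R (n + 1) = R n ^ 2 + 2 * R n * r * s ^ (2 ^ n - 1)
      - 2 * r * s ^ (2 ^ (n + 1) - 1)) :
    ∀ n : ℕ, 2 ≤ n → R n % 3 = 1 := by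
  have hr3 : (r : ZMod 3) ≠ 0 := by
    intro h
    apply hr
    have := (ZMod.intCast_zmod_eq_zero_iff_dvd r 3).mp h
    exact_mod_cast this
  have cast1 : ∀ x : ℤ, ((x : ZMod 3) = 1) → x % 3 = 1 := by
    intro x hx
    have h : ((x : ℤ) : ZMod 3) = ((1 : ℤ) : ZMod 3) := by push_cast; exact hx
    rw [ZMod.intCast_eq_intCast_iff] at h
    have h2 : x % 3 = 1 % 3 := h
    omega
  suffices H : ∀ m : ℕ, ((R (m + 2) : ZMod 3)) = 1 by
    intro n hn
    obtain ⟨m, rfl⟩ : ∃ m, n = m + 2 := ⟨n - 2, by omega⟩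
    exact cast1 _ (H m)
  intro m
  induction m with
  | zero =>
    have h1 : R 1 = -r ^ 2 - 2 * r * s := by
      have := hRrec 0
      rw [hR0] at this
      norm_num at this
      linarith [this]
    have h2 : R 2 = (R 1) ^ 2 + 2 * (R 1) * r * s - 2 * r * s ^ 3 := by
      have := hRrec 1
      norm_num at this
      linarith [this]
    have key : ∀ a b : ZMod 3, a ≠ 0 →
        (-a ^ 2 - 2 * a * b) ^ 2 + 2 * (-a ^ 2 - 2 * a * b) * a * b - 2 * a * b ^ 3 = 1 := by
      decide
    have : ((R 2 : ℤ) : ZMod 3) =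
        (-(r : ZMod 3) ^ 2 - 2 * r * s) ^ 2 + 2 * (-(r : ZMod 3) ^ 2 - 2 * r * s) * r * s
          - 2 * r * (s : ZMod 3) ^ 3 := by
      rw [h2, h1]; push_cast; ring
    rw [this]
    exact key _ _ hr3
  | succ k ih =>
    have h := hRrec (k + 2)
    have hcast : ((R (k + 2 + 1) : ℤ) : ZMod 3) =
        ((R (k + 2) : ZMod 3)) ^ 2 + 2 * (R (k + 2) : ZMod 3) * r * (s : ZMod 3) ^ (2 ^ (k + 2) - 1)
          - 2 * r * (s : ZMod 3) ^ (2 ^ (k + 2 + 1) - 1) := by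
      rw [h]; push_cast; ring
    rw [show k + 1 + 2 = k + 2 + 1 by ring, hcast, ih,
      spow3 s (k + 2) (by omega), spow3 s (k + 2 + 1) (by omega)]
    ring
end

section
/- Let a = r/s with gcd(r,s) = 1, s > 0, r odd, c = -a - a², f(x) = x² + c, and let r_n be the numerator of f^n(0) - a in lowest terms. Then r_n ≡ 1 (mod 4) for all n ≥ 2. -/
theorem stmt16 (r s : ℤ) (hco : Int.gcd r s = 1) (hs : 0 < s) (hr : Odd r)
    (R : ℕ → ℤ) (hR0 : R 0 = -r)
    (hRrec : ∀ n : ℕ, R (n + 1) = R n ^ 2 + 2 * R n * r * s ^ (2 ^ n - 1)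
      - 2 * r * s ^ (2 ^ (n + 1) - 1)) :
    ∀ n : ℕ, 2 ≤ n → R n % 4 = 1 := by
  have hodd : ∀ n, Odd (R n) := by
    intro n
    induction n with
    | zero => rw [hR0]; exact hr.neg
    | succ n ih =>
      obtain ⟨k, hk⟩ := ih
      exact ⟨2 * k ^ 2 + 2 * k + (2 * k + 1) * r * s ^ (2 ^ n - 1)
        - r * s ^ (2 ^ (n + 1) - 1), by rw [hRrec, hk]; ring⟩
  have hpar : ∀ e : ℕ, 1 ≤ e → (2 : ℤ) ∣ s ^ e - s := by
    intro e he
    rcases Int.even_or_odd s with hs' | hs'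
    · obtain ⟨t, ht⟩ := hs'
      exact dvd_sub (dvd_pow ⟨t, by omega⟩ (by omega)) ⟨t, by omega⟩
    · have h1 : Odd (s ^ e) := hs'.pow
      obtain ⟨u, hu⟩ := h1
      obtain ⟨v, hv⟩ := hs'
      exact ⟨u - v, by omega⟩
  intro n hn
  obtain ⟨m, rfl⟩ : ∃ m, n = m + 1 := ⟨n - 1, by omega⟩
  have hm : 1 ≤ m := by omega
  have ha : 1 ≤ 2 ^ m - 1 := by
    have : 1 < 2 ^ m := Nat.one_lt_two_pow_iff.mpr (by omega)
    omega
  have hb : 1 ≤ 2 ^ (m + 1) - 1 := by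
    have : 1 < 2 ^ (m + 1) := Nat.one_lt_two_pow_iff.mpr (by omega)
    omega
  obtain ⟨k, hk⟩ := hodd m
  have h2 : (2 : ℤ) ∣ R m * s ^ (2 ^ m - 1) - s ^ (2 ^ (m + 1) - 1) := by
    obtain ⟨u, hu⟩ := hpar _ ha
    obtain ⟨v, hv⟩ := hpar _ hb
    exact ⟨k * s ^ (2 ^ m - 1) + u - v, by rw [hk]; linarith [hu, hv]⟩
  obtain ⟨w, hw⟩ := h2
  have h4 : (4 : ℤ) ∣ R (m + 1) - 1 :=
    ⟨k ^ 2 + k + r * w, by rw [hRrec]; linear_combination (R m + 2 * k + 1) * hk + 2 * r * hw⟩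
  obtain ⟨q, hq⟩ := h4
  omega
end

section
/- Let a = r/s ∈ ℚ with gcd(r,s) = 1, s > 0, c = -1 + a - a², f(x) = x² + c. Then for all n ≥ 0, the denominator of f^n(0) - a in lowest terms is s^(2^n), and the numerators satisfy r_0 = -r and r_{n+1} = r_n² + 2 r_n r s^(2^n - 1) - s^(2^(n+1)). -/
/-!
Conjugating by the translation x ↦ x - a turns f into g(y) = y² + 2ay - 1, so
y_n = f^n(0) - a satisfies y_{n+1} = y_n² + 2a y_n - 1 with y_0 = -a. Writing
y_n = r_n / s^(2^n) with r_n given by the stated recurrence, it remains to see that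
r_n is coprime to s: modulo s, r_{n+1} ≡ r_n (r_n + 2 r s^(2^n - 1)), and the second
factor is r for n = 0 and ≡ r_n for n ≥ 1.
-/

def orbitNum (r s : ℤ) : ℕ → ℤ
  | 0 => -r
  | n + 1 => orbitNum r s n ^ 2 + 2 * orbitNum r s n * r * s ^ (2 ^ n - 1) - s ^ (2 ^ (n + 1))

namespace orbitNum

variable (r s : ℤ)

lemma two_pow_sub_one_add_one (n : ℕ) : 2 ^ n - 1 + 1 = 2 ^ n :=
  Nat.sub_add_cancel Nat.one_le_two_pow

lemma succ_eq_mul_add (n : ℕ) :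
    orbitNum r s (n + 1) = orbitNum r s n * (orbitNum r s n + 2 * r * s ^ (2 ^ n - 1))
      + s * -s ^ (2 ^ (n + 1) - 1) := by
  have hs : s * s ^ (2 ^ (n + 1) - 1) = s ^ (2 ^ (n + 1)) := by
    rw [← pow_succ', two_pow_sub_one_add_one]
  rw [orbitNum, mul_neg, hs]
  ring

lemma isCoprime_add (hco : IsCoprime r s) (n : ℕ) (ih : IsCoprime (orbitNum r s n) s) :
    IsCoprime (orbitNum r s n + 2 * r * s ^ (2 ^ n - 1)) s := by
  rcases n with _ | n
  · simpa [orbitNum, two_mul, add_assoc] using hco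
  · have hs : s ^ (2 ^ (n + 1) - 1) = s * s ^ (2 ^ (n + 1) - 1 - 1) := by
      rw [← pow_succ', Nat.sub_add_cancel]
      exact Nat.le_sub_one_of_lt (Nat.one_lt_two_pow (Nat.succ_ne_zero n))
    rw [hs, mul_left_comm]
    exact ih.add_mul_left_left _

theorem isCoprime (hco : IsCoprime r s) (n : ℕ) : IsCoprime (orbitNum r s n) s := by
  induction n with
  | zero => exact hco.neg_left
  | succ n ih =>
    rw [succ_eq_mul_add]
    exact (ih.mul_left (isCoprime_add r s hco n ih)).add_mul_left_left _

theorem succ_div {K : Type*} [Field K] (hs : (s : K) ≠ 0) (n : ℕ) :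
    (orbitNum r s (n + 1) : K) / (s : K) ^ 2 ^ (n + 1) =
      ((orbitNum r s n : K) / (s : K) ^ 2 ^ n) ^ 2
        + 2 * ((r : K) / s) * ((orbitNum r s n : K) / (s : K) ^ 2 ^ n) - 1 := by
  obtain ⟨k, hk⟩ : ∃ k, 2 ^ n - 1 = k := ⟨_, rfl⟩
  have hn : 2 ^ n = k + 1 := by rw [← hk, two_pow_sub_one_add_one]
  have hn' : 2 ^ (n + 1) = 2 * (k + 1) := by rw [pow_succ, hn, mul_comm]
  rw [orbitNum, hk, hn, hn']
  push_cast
  field_simp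
  ring

end orbitNum

theorem iterate_sub_eq_orbitNum_div {K : Type*} [Field K] (r s : ℤ) (hs : (s : K) ≠ 0)
    (a : K) (ha : a = r / s) (f : K → K) (hf : ∀ x, f x = x ^ 2 + (-1 + a - a ^ 2)) (n : ℕ) :
    f^[n] 0 - a = (orbitNum r s n : K) / (s : K) ^ 2 ^ n := by
  induction n with
  | zero => simp [orbitNum, ha, neg_div]
  | succ n ih =>
    have hconj : f^[n + 1] 0 - a = (f^[n] 0 - a) ^ 2 + 2 * a * (f^[n] 0 - a) - 1 := by
      rw [Function.iterate_succ_apply', hf]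
      ring
    rw [hconj, ih, orbitNum.succ_div r s hs, ha]

theorem stmt17 (r s : ℤ) (hco : Int.gcd r s = 1) (hs : 0 < s)
    (a : ℚ) (ha : a = (r : ℚ) / (s : ℚ)) (c : ℚ) (hc : c = -1 + a - a^2)
    (f : ℚ → ℚ) (hf : ∀ x, f x = x^2 + c) :
    (∀ n : ℕ, ((f^[n] 0 - a).den : ℤ) = s ^ (2 ^ n)) ∧
    (f^[0] 0 - a).num = -r ∧
    ∀ n : ℕ, (f^[n+1] 0 - a).num =
      (f^[n] 0 - a).num ^ 2 + 2 * (f^[n] 0 - a).num * r * s ^ (2 ^ n - 1)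
        - s ^ (2 ^ (n + 1)) := by
  subst hc
  have hval n : f^[n] 0 - a = ((orbitNum r s n : ℤ) : ℚ) / ((s ^ 2 ^ n : ℤ) : ℚ) := by
    push_cast
    exact iterate_sub_eq_orbitNum_div r s (by positivity) a ha f hf n
  have hcop n : Nat.Coprime (orbitNum r s n).natAbs (s ^ 2 ^ n).natAbs :=
    Int.isCoprime_iff_gcd_eq_one.mp
      (orbitNum.isCoprime r s (Int.isCoprime_iff_gcd_eq_one.mpr hco) n).pow_right
  have hnum n : (f^[n] 0 - a).num = orbitNum r s n := by
    rw [hval]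
    exact Rat.num_div_eq_of_coprime (by positivity) (hcop n)
  refine ⟨fun n => ?_, hnum 0, fun n => ?_⟩
  · rw [hval]
    exact Rat.den_div_eq_of_coprime (by positivity) (hcop n)
  · rw [hnum, hnum]
    rfl
end

section
/- Let a ∈ ℚ with v_2(a) = 1, c = -1 + a - a², f(x) = x² + c. Then v_2(f^n(0) - a) = 2 for all even n ≥ 2 and v_2(f^n(0) - a) = 0 for all odd n ≥ 1. -/
/-!
Translating by `a`, the orbit `dₙ = fⁿ(0) - a` of `-a` is the orbit under `g(x) = x² + 2ax - 1`.
Since `|2a|₂ = 1/4`, one has `g(x) + 2a = (x + 1)(x + 1 + 2(a - 1))` and `g(y) + 1 = y(y + 2a)`, so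
`dₙ ≡ -1 (mod 4)` for odd `n` and `dₙ ≡ -2a (mod 8)` for even `n ≥ 2`; the latter forces `v₂(dₙ) = v₂(2a) = 2`.
-/

open Function

lemma padicValRat_eq_of_padicNorm_eq_zpow {p : ℕ} [hp : Fact p.Prime] {q : ℚ} {m : ℤ}
    (h : padicNorm p q = (p : ℚ) ^ (-m)) : q ≠ 0 ∧ padicValRat p q = m := by
  have hq : q ≠ 0 := by
    rintro rfl
    rw [padicNorm.zero] at h
    exact (zpow_ne_zero _ (by exact_mod_cast hp.out.ne_zero) h.symm).elim
  refine ⟨hq, ?_⟩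
  rw [padicNorm.eq_zpow_of_nonzero hq] at h
  exact neg_inj.mp (zpow_right_injective₀ (by exact_mod_cast hp.out.pos)
    (by exact_mod_cast hp.out.one_lt.ne') h)

lemma padicNorm_two_two : padicNorm 2 (2 : ℚ) = 1 / 2 := by
  simpa using padicNorm.padicNorm_p_of_prime (p := 2)

lemma padicNorm_eq_one_of_padicNorm_add_one_le {x : ℚ} (hx : padicNorm 2 (x + 1) ≤ 1 / 4) :
    padicNorm 2 x = 1 := by
  have hne : padicNorm 2 (x + 1) ≠ padicNorm 2 (-1) := by
    rw [padicNorm.neg, padicNorm.one]; linarith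
  have := padicNorm.add_eq_max_of_ne hne
  rw [add_neg_cancel_right, padicNorm.neg, padicNorm.one] at this
  rw [this, max_eq_right (by linarith)]

/-- The map `x ↦ x² + c` with `c = -1 + a - a²`, conjugated by the translation `x ↦ x - a`. -/
def conjQuad (a x : ℚ) : ℚ := x ^ 2 + 2 * a * x - 1

section conjQuad

variable {a : ℚ} (ha : padicNorm 2 a = 1 / 2)
include ha

lemma padicNorm_two_mul_of_padicNorm_eq_half : padicNorm 2 (2 * a) = 1 / 4 := by
  rw [padicNorm.mul, padicNorm_two_two, ha]; norm_num

lemma padicNorm_eq_quarter_of_padicNorm_add_two_mul_le {y : ℚ}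
    (hy : padicNorm 2 (y + 2 * a) ≤ 1 / 8) : padicNorm 2 y = 1 / 4 := by
  have h2a := padicNorm_two_mul_of_padicNorm_eq_half ha
  have hne : padicNorm 2 (y + 2 * a) ≠ padicNorm 2 (-(2 * a)) := by
    rw [padicNorm.neg, h2a]; linarith
  have := padicNorm.add_eq_max_of_ne hne
  rw [add_neg_cancel_right, padicNorm.neg, h2a] at this
  rw [this, max_eq_right (by linarith)]

lemma padicNorm_conjQuad_add_two_mul_le {x : ℚ} (hx : padicNorm 2 (x + 1) ≤ 1 / 4) :
    padicNorm 2 (conjQuad a x + 2 * a) ≤ 1 / 8 := by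
  have ha1 : padicNorm 2 (a - 1) ≤ 1 := by
    refine padicNorm.sub.trans (max_le ?_ ?_) <;> norm_num [ha]
  have h2a1 : padicNorm 2 (2 * (a - 1)) ≤ 1 / 2 := by
    rw [padicNorm.mul, padicNorm_two_two]; linarith
  have hfac : padicNorm 2 (x + 1 + 2 * (a - 1)) ≤ 1 / 2 :=
    padicNorm.nonarchimedean.trans (max_le (by linarith) h2a1)
  have hprod : conjQuad a x + 2 * a = (x + 1) * (x + 1 + 2 * (a - 1)) := by
    rw [conjQuad]; ring
  rw [hprod, padicNorm.mul]
  calc padicNorm 2 (x + 1) * padicNorm 2 (x + 1 + 2 * (a - 1)) ≤ 1 / 4 * (1 / 2) :=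
        mul_le_mul hx hfac (padicNorm.nonneg _) (by norm_num)
    _ = 1 / 8 := by norm_num

lemma padicNorm_conjQuad_add_one_le {y : ℚ} (hy : padicNorm 2 (y + 2 * a) ≤ 1 / 8) :
    padicNorm 2 (conjQuad a y + 1) ≤ 1 / 4 := by
  have hprod : conjQuad a y + 1 = y * (y + 2 * a) := by rw [conjQuad]; ring
  rw [hprod, padicNorm.mul, padicNorm_eq_quarter_of_padicNorm_add_two_mul_le ha hy]
  calc 1 / 4 * padicNorm 2 (y + 2 * a) ≤ 1 / 4 * (1 / 8) := by gcongr
    _ ≤ 1 / 4 := by norm_num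

lemma padicNorm_iterate_conjQuad_odd_add_one_le (m : ℕ) :
    padicNorm 2 ((conjQuad a)^[2 * m + 1] (-a) + 1) ≤ 1 / 4 := by
  induction m with
  | zero =>
    have hbase : conjQuad a (-a) + 1 = -(a * a) := by rw [conjQuad]; ring
    rw [iterate_one, hbase, padicNorm.neg, padicNorm.mul, ha]; norm_num
  | succ m ih =>
    rw [show 2 * (m + 1) + 1 = 2 * m + 1 + 1 + 1 by ring, iterate_succ_apply',
      iterate_succ_apply']
    exact padicNorm_conjQuad_add_one_le ha (padicNorm_conjQuad_add_two_mul_le ha ih)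

lemma padicNorm_iterate_conjQuad_odd (m : ℕ) :
    padicNorm 2 ((conjQuad a)^[2 * m + 1] (-a)) = 1 :=
  padicNorm_eq_one_of_padicNorm_add_one_le (padicNorm_iterate_conjQuad_odd_add_one_le ha m)

lemma padicNorm_iterate_conjQuad_even (m : ℕ) :
    padicNorm 2 ((conjQuad a)^[2 * m + 2] (-a)) = 1 / 4 := by
  rw [iterate_succ_apply']
  exact padicNorm_eq_quarter_of_padicNorm_add_two_mul_le ha
    (padicNorm_conjQuad_add_two_mul_le ha (padicNorm_iterate_conjQuad_odd_add_one_le ha m))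

end conjQuad

theorem stmt18 (a : ℚ) (ha : a ≠ 0) (hv : padicValRat 2 a = 1)
    (c : ℚ) (hc : c = -1 + a - a^2) (f : ℚ → ℚ) (hf : ∀ x, f x = x^2 + c) :
    (∀ n : ℕ, 2 ≤ n → Even n → f^[n] 0 - a ≠ 0 ∧ padicValRat 2 (f^[n] 0 - a) = 2) ∧
    (∀ n : ℕ, 1 ≤ n → Odd n → f^[n] 0 - a ≠ 0 ∧ padicValRat 2 (f^[n] 0 - a) = 0) := by
  have hnorm : padicNorm 2 a = 1 / 2 := by
    rw [padicNorm.eq_zpow_of_nonzero ha, hv]; norm_num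
  have hsemiconj : Semiconj (· - a) f (conjQuad a) := fun x => by
    rw [hf, hc, conjQuad]; ring
  have horbit (n : ℕ) : f^[n] 0 - a = (conjQuad a)^[n] (-a) := by
    simpa using hsemiconj.iterate_right n 0
  constructor
  · rintro n hn ⟨k, rfl⟩
    obtain ⟨m, rfl⟩ : ∃ m, k = m + 1 := ⟨k - 1, by omega⟩
    rw [horbit, show m + 1 + (m + 1) = 2 * m + 2 by ring]
    apply padicValRat_eq_of_padicNorm_eq_zpow
    rw [padicNorm_iterate_conjQuad_even hnorm]; norm_num
  · rintro n - ⟨m, rfl⟩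
    rw [horbit]
    apply padicValRat_eq_of_padicNorm_eq_zpow
    rw [padicNorm_iterate_conjQuad_odd hnorm]; norm_num
end

section
/- Let a be a real number with 0 < a < γ, where γ ≈ 1.54 is the unique positive real root of a⁴ - 2a³ + 2a² - 2a = 0 other than 0 (i.e., the real root of x³ - 2x² + 2x - 2 = 0). Let c = -1 + a - a² and f(x) = x² + c. Then f^n(0) - a < 0 for all n ≥ 1. -/
theorem stmt19 (γ : ℝ) (hγ1 : 0 < γ) (hγ : γ^3 - 2*γ^2 + 2*γ - 2 = 0)
    (a : ℝ) (ha1 : 0 < a) (ha2 : a < γ)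
    (c : ℝ) (hc : c = -1 + a - a^2) (f : ℝ → ℝ) (hf : ∀ x, f x = x^2 + c) :
    ∀ n : ℕ, 1 ≤ n → f^[n] 0 - a < 0 := by
  have hγlt : γ < 1.6 := by nlinarith [sq_nonneg (γ - 0.2), sq_nonneg γ, sq_nonneg (γ - 1)]
  have hcneg : c < 0 := by nlinarith [sq_nonneg (a - 1)]
  have hc2 : 0 ≤ c + 2 := by nlinarith
  have hga : a^3 - 2*a^2 + 2*a - 2 < 0 := by
    nlinarith [sq_nonneg (a + γ - 2), sq_nonneg (a - γ), mul_pos ha1 hγ1]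
  have hkey : c^2 + c < a := by nlinarith
  have hinv : ∀ n : ℕ, 1 ≤ n → c ≤ f^[n] 0 ∧ f^[n] 0 ≤ c^2 + c := by
    intro n hn
    induction n with
    | zero => omega
    | succ m ih =>
      rcases Nat.eq_or_lt_of_le hn with h | h
      · have : m = 0 := by omega
        subst this
        simp [hf]
        nlinarith [sq_nonneg c]
      · have hm : 1 ≤ m := by omega
        obtain ⟨h1, h2⟩ := ih hm
        rw [Function.iterate_succ_apply', hf]
        have hup : f^[m] 0 ≤ -c := by
          nlinarith [mul_nonneg (neg_nonneg.2 hcneg.le) hc2]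
        have hx2 : (f^[m] 0)^2 ≤ c^2 := by
          nlinarith [mul_nonneg (sub_nonneg.2 h1) (sub_nonneg.2 hup)]
        constructor
        · nlinarith [sq_nonneg (f^[m] 0)]
        · nlinarith
  intro n hn
  obtain ⟨h1, h2⟩ := hinv n hn
  linarith
end
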